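/- arXiv:1112.1129 — 6 statements merged into one kernel-verified Lean document; each statement's English description precedes it below -/
import Mathlib

section
/- Let X₀ = D(c₀, r₀) and X₁ = D(c₁, r₁) be properly overlapping disks (|c₀ − c₁| < r₀ + r₁) with positive radii. Define c_{1/2} = (c₁r₀ + c₀r₁)/(r₀ + r₁) and r_{1/2} = √(r₀r₁)·√((r₀+r₁)² − |c₀−c₁|²)/(r₀ + r₁). Then every point p lying in the intersection X₀ ∩ X₁ satisfies |p − c_{1/2}| ≤ r_{1/2}. -/
/-!
Put `s = r₀ + r₁`. The weighted parallelogram law gives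
`s² ‖p - c_{1/2}‖² = s (r₁ ‖p - c₀‖² + r₀ ‖p - c₁‖²) - r₀ r₁ ‖c₀ - c₁‖²`,
and bounding `‖p - cᵢ‖ ≤ rᵢ` turns the right-hand side into `r₀ r₁ (s² - ‖c₀ - c₁‖²)`.
-/

section WeightedParallelogram

variable {E : Type*} [NormedAddCommGroup E] [InnerProductSpace ℝ E]

/-- For `a = b = 1` this is the parallelogram law. -/
theorem norm_smul_add_smul_sq (a b : ℝ) (u v : E) :
    ‖a • u + b • v‖ ^ 2 = (a + b) * (a * ‖u‖ ^ 2 + b * ‖v‖ ^ 2) - a * b * ‖u - v‖ ^ 2 := by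
  rw [norm_add_sq_real, norm_sub_sq_real, norm_smul, norm_smul, real_inner_smul_left,
    real_inner_smul_right, mul_pow, mul_pow, Real.norm_eq_abs, Real.norm_eq_abs, sq_abs, sq_abs]
  ring

theorem norm_smul_sub_add_smul_sub_sq_le {c₀ c₁ p : E} {r₀ r₁ : ℝ}
    (hp₀ : ‖p - c₀‖ ≤ r₀) (hp₁ : ‖p - c₁‖ ≤ r₁) :
    ‖r₁ • (p - c₀) + r₀ • (p - c₁)‖ ^ 2 ≤ r₀ * r₁ * ((r₀ + r₁) ^ 2 - ‖c₀ - c₁‖ ^ 2) := by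
  have hr₀ : 0 ≤ r₀ := (norm_nonneg _).trans hp₀
  have hr₁ : 0 ≤ r₁ := (norm_nonneg _).trans hp₁
  have hsq₀ : ‖p - c₀‖ ^ 2 ≤ r₀ ^ 2 := pow_le_pow_left₀ (norm_nonneg _) hp₀ 2
  have hsq₁ : ‖p - c₁‖ ^ 2 ≤ r₁ ^ 2 := pow_le_pow_left₀ (norm_nonneg _) hp₁ 2
  have hbound := mul_le_mul_of_nonneg_left
    (add_le_add (mul_le_mul_of_nonneg_left hsq₀ hr₁) (mul_le_mul_of_nonneg_left hsq₁ hr₀))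
    (add_nonneg hr₁ hr₀)
  have hdiff : (p - c₀) - (p - c₁) = c₁ - c₀ := sub_sub_sub_cancel_left _ _ _
  rw [norm_smul_add_smul_sq, hdiff, norm_sub_rev c₁ c₀]
  linear_combination hbound

theorem dist_inv_smul_weighted_sum_le {c₀ c₁ p : E} {r₀ r₁ : ℝ} (hs : 0 < r₀ + r₁)
    (hp₀ : dist p c₀ ≤ r₀) (hp₁ : dist p c₁ ≤ r₁) :
    dist p ((r₀ + r₁)⁻¹ • (r₁ • c₀ + r₀ • c₁)) ≤
      √(r₀ * r₁) * √((r₀ + r₁) ^ 2 - dist c₀ c₁ ^ 2) / (r₀ + r₁) := by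
  rw [dist_eq_norm] at hp₀ hp₁ ⊢
  have hr₀ : 0 ≤ r₀ := (norm_nonneg _).trans hp₀
  have hr₁ : 0 ≤ r₁ := (norm_nonneg _).trans hp₁
  have hscale : (r₀ + r₁) • (p - (r₀ + r₁)⁻¹ • (r₁ • c₀ + r₀ • c₁)) =
      r₁ • (p - c₀) + r₀ • (p - c₁) := by
    rw [smul_sub, smul_inv_smul₀ hs.ne']
    module
  have hnorm : ‖p - (r₀ + r₁)⁻¹ • (r₁ • c₀ + r₀ • c₁)‖ =
      ‖r₁ • (p - c₀) + r₀ • (p - c₁)‖ / (r₀ + r₁) := by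
    rw [← hscale, norm_smul, Real.norm_of_nonneg hs.le, mul_div_cancel_left₀ _ hs.ne']
  rw [hnorm, div_le_div_iff_of_pos_right hs, ← Real.sqrt_mul (mul_nonneg hr₀ hr₁), dist_eq_norm]
  exact Real.le_sqrt_of_sq_le (norm_smul_sub_add_smul_sub_sq_le hp₀ hp₁)

end WeightedParallelogram

theorem midpoint_disk_contains_intersection_general (c₀ c₁ : ℂ) (r₀ r₁ : ℝ)
    (h₀ : 0 < r₀) (h₁ : 0 < r₁) (p : ℂ)
    (hp : p ∈ Metric.closedBall c₀ r₀ ∩ Metric.closedBall c₁ r₁) :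
    dist p ((c₁ * (r₀ : ℂ) + c₀ * (r₁ : ℂ)) / (((r₀ : ℝ) + r₁ : ℝ) : ℂ)) ≤
      Real.sqrt (r₀ * r₁) * Real.sqrt ((r₀ + r₁) ^ 2 - dist c₀ c₁ ^ 2) / (r₀ + r₁) := by
  have hcenter : (c₁ * (r₀ : ℂ) + c₀ * (r₁ : ℂ)) / (((r₀ : ℝ) + r₁ : ℝ) : ℂ) =
      (r₀ + r₁)⁻¹ • (r₁ • c₀ + r₀ • c₁) := by
    simp only [Complex.real_smul]
    push_cast
    ring
  rw [hcenter]
  exact dist_inv_smul_weighted_sum_le (add_pos h₀ h₁) hp.1 hp.2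

/-- The midpoint disk of two properly overlapping disks contains their
intersection: every p ∈ X₀ ∩ X₁ satisfies |p − c_{1/2}| ≤ r_{1/2}. -/
theorem midpoint_disk_contains_intersection (c₀ c₁ : ℂ) (r₀ r₁ : ℝ)
    (h₀ : 0 < r₀) (h₁ : 0 < r₁) (hover : dist c₀ c₁ < r₀ + r₁) (p : ℂ)
    (hp : p ∈ Metric.closedBall c₀ r₀ ∩ Metric.closedBall c₁ r₁) :
    dist p ((c₁ * (r₀ : ℂ) + c₀ * (r₁ : ℂ)) / (((r₀ : ℝ) + r₁ : ℝ) : ℂ)) ≤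
      Real.sqrt (r₀ * r₁) * Real.sqrt ((r₀ + r₁) ^ 2 - dist c₀ c₁ ^ 2) / (r₀ + r₁) :=
  midpoint_disk_contains_intersection_general c₀ c₁ r₀ r₁ h₀ h₁ p hp
end

section
/- Let X₀ ⊆ Y₀ and X₁ ⊆ Y₁ be disks such that X₀, X₁ properly overlap and Y₀, Y₁ properly overlap, with X_i and Y_i concentric for i = 0,1 (c_{X_i} = c_{Y_i}). Then the midpoint disks satisfy n(X_{1/2}, Y_{1/2}) ≥ min{n(X₀,Y₀), n(X₁,Y₁)}, where X_{1/2} denotes the midpoint disk of X₀, X₁ (center (c₁r_{X_0}+c₀r_{X_1})/(r_{X_0}+r_{X_1}), radius √(r_{X_0}r_{X_1})√((r_{X_0}+r_{X_1})²−|c₀−c₁|²)/(r_{X_0}+r_{X_1})), and n is the nesting distance. -/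
/-- Center of the midpoint disk of two properly overlapping disks. -/
noncomputable def midC (c₀ c₁ : ℂ) (r₀ r₁ : ℝ) : ℂ :=
  (c₁ * (r₀ : ℂ) + c₀ * (r₁ : ℂ)) / (((r₀ : ℝ) + r₁ : ℝ) : ℂ)

/-- Radius of the midpoint disk of two properly overlapping disks. -/
noncomputable def midR (c₀ c₁ : ℂ) (r₀ r₁ : ℝ) : ℝ :=
  Real.sqrt (r₀ * r₁) * Real.sqrt ((r₀ + r₁) ^ 2 - dist c₀ c₁ ^ 2) / (r₀ + r₁)

/-- The nesting distance n(X,Y) = r_Y − r_X − |c_X − c_Y|. -/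
noncomputable def nest (cX : ℂ) (rX : ℝ) (cY : ℂ) (rY : ℝ) : ℝ :=
  rY - rX - dist cX cY

/-!
Write `d = |c₀ - c₁|` and `m = min (n(X₀,Y₀), n(X₁,Y₁))`, and let `Z_i` be `X_i` with its radius
enlarged by `m`, so that `X_i ⊆ Z_i ⊆ Y_i` concentrically. Since the nesting distance satisfies the
triangle inequality `n(A,B) + n(B,C) ≤ n(A,C)`, it suffices to show that `n(X_{1/2}, Z_{1/2}) ≥ m`
(enlarging both radii by `m` enlarges the midpoint disk by at least `m`) and that
`n(Z_{1/2}, Y_{1/2}) ≥ 0` (the midpoint disk is monotone in the radii). The midpoint centers lie on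
the segment `[c₀, c₁]` at the parameters `r₀ / (r₀ + r₁)`, so both claims become inequalities between
square roots; after squaring, the difference of the two sides is an explicit sum of nonnegative
terms, the only non-polynomial input being the Cauchy–Schwarz bound
`2 √(r₀ r₁) √((r₀ + r₁)² - d²) ≤ (r₀ + r₁)² - |r₀ - r₁| d`.
-/

open AffineMap

lemma nest_add_nest_le (cX cY cZ : ℂ) (rX rY rZ : ℝ) :
    nest cX rX cY rY + nest cY rY cZ rZ ≤ nest cX rX cZ rZ := by
  unfold nest
  linarith [dist_triangle cX cY cZ]

lemma nest_same_center (c : ℂ) (r r' : ℝ) : nest c r c r' = r' - r := by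
  simp [nest]

section Midpoint

variable (c₀ c₁ : ℂ)

lemma midC_eq_lineMap {r₀ r₁ : ℝ} (h : r₀ + r₁ ≠ 0) :
    midC c₀ c₁ r₀ r₁ = lineMap c₀ c₁ (r₀ / (r₀ + r₁)) := by
  have h' : ((r₀ : ℂ) + r₁) ≠ 0 := by exact_mod_cast h
  rw [lineMap_apply_module, Complex.real_smul, Complex.real_smul, midC]
  push_cast
  field_simp
  ring

lemma dist_midC_midC {a₀ a₁ b₀ b₁ : ℝ} (ha : a₀ + a₁ ≠ 0) (hb : b₀ + b₁ ≠ 0) :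
    dist (midC c₀ c₁ a₀ a₁) (midC c₀ c₁ b₀ b₁) =
      |a₀ / (a₀ + a₁) - b₀ / (b₀ + b₁)| * dist c₀ c₁ := by
  rw [midC_eq_lineMap c₀ c₁ ha, midC_eq_lineMap c₀ c₁ hb, dist_lineMap_lineMap, Real.dist_eq]

lemma sq_midR_mul {r₀ r₁ : ℝ} (h₀ : 0 < r₀) (h₁ : 0 < r₁) (hd : dist c₀ c₁ ≤ r₀ + r₁) :
    (midR c₀ c₁ r₀ r₁ * (r₀ + r₁)) ^ 2 = r₀ * r₁ * ((r₀ + r₁) ^ 2 - dist c₀ c₁ ^ 2) := by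
  have hd₀ : 0 ≤ dist c₀ c₁ := dist_nonneg
  rw [midR, div_mul_cancel₀ _ (by positivity), mul_pow, Real.sq_sqrt (by positivity),
    Real.sq_sqrt (by nlinarith)]

lemma midR_nonneg {r₀ r₁ : ℝ} (h₀ : 0 < r₀) (h₁ : 0 < r₁) : 0 ≤ midR c₀ c₁ r₀ r₁ := by
  unfold midR
  positivity

lemma two_mul_midR_mul_le {r₀ r₁ : ℝ} (h₀ : 0 < r₀) (h₁ : 0 < r₁) (hd : dist c₀ c₁ ≤ r₀ + r₁) :
    2 * (midR c₀ c₁ r₀ r₁ * (r₀ + r₁)) ≤ (r₀ + r₁) ^ 2 - |r₀ - r₁| * dist c₀ c₁ := by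
  set d := dist c₀ c₁
  set s := r₀ + r₁
  set e := |r₀ - r₁|
  have he : e ≤ s := abs_le.2 ⟨by linarith, by linarith⟩
  have hrhs : 0 ≤ s ^ 2 - e * d :=
    sub_nonneg.2 ((mul_le_mul he hd dist_nonneg (by positivity)).trans_eq (sq s).symm)
  refine le_of_pow_le_pow_left₀ two_ne_zero hrhs ?_
  -- `4 r₀ r₁ = s² - e²`
  have hsplit : (s ^ 2 - e * d) ^ 2 - (2 * (midR c₀ c₁ r₀ r₁ * s)) ^ 2 = s ^ 2 * (d - e) ^ 2 := by
    linear_combination -4 * sq_midR_mul c₀ c₁ h₀ h₁ hd - (s ^ 2 - d ^ 2) * sq_abs (r₀ - r₁)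
  linarith [sq_nonneg (s * (d - e))]

lemma nest_midC_midR_nonneg {a₀ a₁ b₀ b₁ : ℝ} (ha₀ : 0 < a₀) (ha₁ : 0 < a₁)
    (h₀ : a₀ ≤ b₀) (h₁ : a₁ ≤ b₁) (hd : dist c₀ c₁ ≤ a₀ + a₁) :
    0 ≤ nest (midC c₀ c₁ a₀ a₁) (midR c₀ c₁ a₀ a₁) (midC c₀ c₁ b₀ b₁) (midR c₀ c₁ b₀ b₁) := by
  set d := dist c₀ c₁
  set s := a₀ + a₁
  set t := b₀ + b₁
  set u := midR c₀ c₁ a₀ a₁ * s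
  set v := midR c₀ c₁ b₀ b₁ * t
  set K := |a₀ * b₁ - a₁ * b₀|
  have hb₀ : 0 < b₀ := ha₀.trans_le h₀
  have hb₁ : 0 < b₁ := ha₁.trans_le h₁
  have hs : 0 < s := by positivity
  have ht : 0 < t := by positivity
  have hnest : nest (midC c₀ c₁ a₀ a₁) (midR c₀ c₁ a₀ a₁) (midC c₀ c₁ b₀ b₁) (midR c₀ c₁ b₀ b₁)
      = (v * s - (d * K + u * t)) / (s * t) := by
    rw [nest, dist_midC_midC c₀ c₁ hs.ne' ht.ne',
      show a₀ / s - b₀ / t = (a₀ * b₁ - a₁ * b₀) / (s * t) by field_simp; ring,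
      abs_div, abs_of_pos (mul_pos hs ht)]
    field_simp
    ring
  have key : d * K + u * t ≤ v * s := by
    have hu : 0 ≤ u := mul_nonneg (midR_nonneg c₀ c₁ ha₀ ha₁) hs.le
    have hv : 0 ≤ v := mul_nonneg (midR_nonneg c₀ c₁ hb₀ hb₁) ht.le
    refine le_of_pow_le_pow_left₀ two_ne_zero (by positivity) ?_
    have hK : K ≤ b₀ * b₁ - a₀ * a₁ := abs_le.2 ⟨by nlinarith, by nlinarith⟩
    have hKe : (a₀ * b₁ - a₁ * b₀) * (a₀ - a₁) ≤ K * |a₀ - a₁| :=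
      (le_abs_self _).trans (abs_mul _ _).le
    have h2u := two_mul_midR_mul_le c₀ c₁ ha₀ ha₁ hd
    have hsplit : (v * s) ^ 2 - (d * K + u * t) ^ 2 =
        s ^ 2 * t ^ 2 * (b₀ * b₁ - a₀ * a₁ - K)
          + d ^ 2 * t * (K * |a₀ - a₁| - (a₀ * b₁ - a₁ * b₀) * (a₀ - a₁))
          + d * K * t * (s ^ 2 - |a₀ - a₁| * d - 2 * u) + K * t * s ^ 2 * (t - d) := by
      linear_combination s ^ 2 * sq_midR_mul c₀ c₁ hb₀ hb₁ (by linarith)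
        - t ^ 2 * sq_midR_mul c₀ c₁ ha₀ ha₁ hd - d ^ 2 * sq_abs (a₀ * b₁ - a₁ * b₀)
    linarith [mul_nonneg (by positivity : 0 ≤ s ^ 2 * t ^ 2) (sub_nonneg.2 hK),
      mul_nonneg (by positivity : 0 ≤ d ^ 2 * t) (sub_nonneg.2 hKe),
      mul_nonneg (by positivity : 0 ≤ d * K * t) (sub_nonneg.2 h2u),
      mul_nonneg (by positivity : 0 ≤ K * t * s ^ 2) (by linarith : 0 ≤ t - d)]
  rw [hnest]
  exact div_nonneg (sub_nonneg.2 key) (by positivity)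

lemma le_nest_midC_midR_add {a₀ a₁ m : ℝ} (ha₀ : 0 < a₀) (ha₁ : 0 < a₁) (hm : 0 ≤ m)
    (hd : dist c₀ c₁ ≤ a₀ + a₁) :
    m ≤ nest (midC c₀ c₁ a₀ a₁) (midR c₀ c₁ a₀ a₁)
      (midC c₀ c₁ (a₀ + m) (a₁ + m)) (midR c₀ c₁ (a₀ + m) (a₁ + m)) := by
  set d := dist c₀ c₁
  set s := a₀ + a₁
  set t := a₀ + m + (a₁ + m)
  set u := midR c₀ c₁ a₀ a₁ * s
  set v := midR c₀ c₁ (a₀ + m) (a₁ + m) * t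
  set e := |a₀ - a₁|
  have hs : 0 < s := by positivity
  have ht : 0 < t := by positivity
  have hnest : nest (midC c₀ c₁ a₀ a₁) (midR c₀ c₁ a₀ a₁)
      (midC c₀ c₁ (a₀ + m) (a₁ + m)) (midR c₀ c₁ (a₀ + m) (a₁ + m)) - m
      = (v * s - (m * s * t + d * (m * e) + u * t)) / (s * t) := by
    rw [nest, dist_midC_midC c₀ c₁ hs.ne' ht.ne',
      show a₀ / s - (a₀ + m) / t = m * (a₀ - a₁) / (s * t) by field_simp; ring,
      abs_div, abs_mul, abs_of_nonneg hm, abs_of_pos (mul_pos hs ht)]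
    field_simp
    ring
  have key : m * s * t + d * (m * e) + u * t ≤ v * s := by
    have hu : 0 ≤ u := mul_nonneg (midR_nonneg c₀ c₁ ha₀ ha₁) hs.le
    have hv : 0 ≤ v := mul_nonneg (midR_nonneg c₀ c₁ (by linarith) (by linarith)) ht.le
    refine le_of_pow_le_pow_left₀ two_ne_zero (by positivity) ?_
    have hsplit : (v * s) ^ 2 - (m * s * t + d * (m * e) + u * t) ^ 2 =
        m * t * (s * t + d * e) * (s ^ 2 - e * d - 2 * u) := by
      linear_combination s ^ 2 * sq_midR_mul c₀ c₁ (r₀ := a₀ + m) (r₁ := a₁ + m) (by linarith)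
          (by linarith) (by linarith)
        - t ^ 2 * sq_midR_mul c₀ c₁ ha₀ ha₁ hd - (d ^ 2 * m ^ 2 - d ^ 2 * m * t) * sq_abs (a₀ - a₁)
    have h2u := two_mul_midR_mul_le c₀ c₁ ha₀ ha₁ hd
    linarith [mul_nonneg (by positivity : 0 ≤ m * t * (s * t + d * e)) (sub_nonneg.2 h2u)]
  rw [← sub_nonneg, hnest]
  exact div_nonneg (sub_nonneg.2 key) (by positivity)

end Midpoint

theorem midpoint_nesting_concentric_general (c₀ c₁ : ℂ) (rX₀ rX₁ rY₀ rY₁ : ℝ)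
    (hX₀ : 0 < rX₀) (hX₁ : 0 < rX₁)
    (hoverX : dist c₀ c₁ < rX₀ + rX₁)
    (hnest₀ : 0 ≤ nest c₀ rX₀ c₀ rY₀) (hnest₁ : 0 ≤ nest c₁ rX₁ c₁ rY₁) :
    min (nest c₀ rX₀ c₀ rY₀) (nest c₁ rX₁ c₁ rY₁) ≤
      nest (midC c₀ c₁ rX₀ rX₁) (midR c₀ c₁ rX₀ rX₁)
        (midC c₀ c₁ rY₀ rY₁) (midR c₀ c₁ rY₀ rY₁) := by
  simp only [nest_same_center] at hnest₀ hnest₁ ⊢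
  set m := min (rY₀ - rX₀) (rY₁ - rX₁)
  have hm : 0 ≤ m := le_min hnest₀ hnest₁
  have hY₀ : rX₀ + m ≤ rY₀ := by linarith [min_le_left (rY₀ - rX₀) (rY₁ - rX₁)]
  have hY₁ : rX₁ + m ≤ rY₁ := by linarith [min_le_right (rY₀ - rX₀) (rY₁ - rX₁)]
  have hXZ := le_nest_midC_midR_add c₀ c₁ hX₀ hX₁ hm hoverX.le
  have hZY := nest_midC_midR_nonneg c₀ c₁ (a₀ := rX₀ + m) (a₁ := rX₁ + m) (by linarith)
    (by linarith) hY₀ hY₁ (by linarith)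
  exact (le_add_of_le_of_nonneg hXZ hZY).trans (nest_add_nest_le _ _ _ _ _ _)

/-- Concentric case of the spacing lemma: for nested concentric pairs
X_i ⊆ Y_i of properly overlapping disks, the midpoint disks satisfy
n(X_{1/2}, Y_{1/2}) ≥ min{n(X₀,Y₀), n(X₁,Y₁)}. -/
theorem midpoint_nesting_concentric (c₀ c₁ : ℂ) (rX₀ rX₁ rY₀ rY₁ : ℝ)
    (hX₀ : 0 < rX₀) (hX₁ : 0 < rX₁) (hY₀ : 0 < rY₀) (hY₁ : 0 < rY₁)
    (hoverX : dist c₀ c₁ < rX₀ + rX₁) (hoverY : dist c₀ c₁ < rY₀ + rY₁)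
    (hnest₀ : 0 ≤ nest c₀ rX₀ c₀ rY₀) (hnest₁ : 0 ≤ nest c₁ rX₁ c₁ rY₁) :
    min (nest c₀ rX₀ c₀ rY₀) (nest c₁ rX₁ c₁ rY₁) ≤
      nest (midC c₀ c₁ rX₀ rX₁) (midR c₀ c₁ rX₀ rX₁)
        (midC c₀ c₁ rY₀ rY₁) (midR c₀ c₁ rY₀ rY₁) :=
  midpoint_nesting_concentric_general c₀ c₁ rX₀ rX₁ rY₀ rY₁ hX₀ hX₁ hoverX hnest₀ hnest₁
end

section
/- Let X₀, X₁ be properly overlapping disks and let H_i = {z ∈ ℂ : ⟨z, (cos θ_i, sin θ_i)⟩ ≥ ρ_i} be half-planes with X_i ⊆ H_i and the boundary line of H_i tangent to X_i, for i = 0,1. If θ₀ ≠ −θ₁ (mod 2π), then the midpoint disk X_{1/2} is contained in the intermediate half-plane ((θ₀+θ₁)/2, (ρ₀+ρ₁)/(2cos((θ₀−θ₁)/2))), where representatives of θ₀, θ₁ are chosen to differ by less than π. -/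
open Complex

/-!
Put u_i = e^{-iθ_i} and w = u₀ + u₁ = 2 cos((θ₀ - θ₁)/2) e^{-i(θ₀ + θ₁)/2}; it suffices to show
ρ₀ + ρ₁ ≤ Re(m w) - R‖w‖ for the midpoint disk D(m, R). With s = r₀ + r₁, the tangency conditions give
s Re(m w) = s (ρ₀ + ρ₁) + s² + Re((c₀ - c₁)(r₁u₁ - r₀u₀)), and the last term is at least -d q with
d = |c₀ - c₁|, q = |r₁u₁ - r₀u₀|. Since q² = s² - r₀r₁‖w‖² and (sR)² = r₀r₁(s² - d²), what remains is
the Aczél-type inequality (s² - q²)(s² - d²) ≤ (s² - d q)², whose defect is s²(q - d)².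
-/

theorem Complex.re_mul_sub_mul_norm_le_of_mem_closedBall {m z : ℂ} {R : ℝ}
    (hz : z ∈ Metric.closedBall m R) (w : ℂ) : (m * w).re - R * ‖w‖ ≤ (z * w).re := by
  have hdist : ‖m - z‖ ≤ R := by rw [← dist_eq, dist_comm]; exact hz
  have : (m * w).re - (z * w).re ≤ R * ‖w‖ :=
    calc (m * w).re - (z * w).re = ((m - z) * w).re := by rw [sub_mul, sub_re]
      _ ≤ ‖m - z‖ * ‖w‖ := (re_le_norm _).trans_eq (norm_mul _ _)
      _ ≤ R * ‖w‖ := by gcongr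
  linarith

theorem Complex.norm_exp_neg_ofReal_mul_I (θ : ℝ) : ‖exp (-(θ : ℂ) * I)‖ = 1 := by
  simp [norm_exp]

theorem Complex.exp_neg_mul_I_add_exp_neg_mul_I (θ₀ θ₁ : ℝ) :
    exp (-(θ₀ : ℂ) * I) + exp (-(θ₁ : ℂ) * I) =
      ((2 * Real.cos ((θ₀ - θ₁) / 2) : ℝ) : ℂ) * exp (-(((θ₀ + θ₁) / 2 : ℝ) : ℂ) * I) := by
  have h₀ : -(θ₀ : ℂ) * I = -(((θ₀ - θ₁) / 2 : ℝ) : ℂ) * I + -(((θ₀ + θ₁) / 2 : ℝ) : ℂ) * I := by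
    push_cast; ring
  have h₁ : -(θ₁ : ℂ) * I = (((θ₀ - θ₁) / 2 : ℝ) : ℂ) * I + -(((θ₀ + θ₁) / 2 : ℝ) : ℂ) * I := by
    push_cast; ring
  rw [h₀, h₁, exp_add, exp_add, ofReal_mul, ofReal_cos, Complex.cos]
  push_cast
  ring_nf

theorem Complex.norm_ofReal_mul_sub_sq_add_mul_norm_add_sq (u₀ u₁ : ℂ) (r₀ r₁ : ℝ) :
    ‖(r₁ : ℂ) * u₁ - r₀ * u₀‖ ^ 2 + r₀ * r₁ * ‖u₀ + u₁‖ ^ 2 =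
      (r₀ + r₁) * (r₀ * ‖u₀‖ ^ 2 + r₁ * ‖u₁‖ ^ 2) := by
  simp only [Complex.sq_norm, normSq_apply, sub_re, sub_im, add_re, add_im, re_ofReal_mul,
    im_ofReal_mul]
  ring

theorem add_mul_re_midC_mul (c₀ c₁ w : ℂ) {r₀ r₁ : ℝ} (hs : r₀ + r₁ ≠ 0) :
    (r₀ + r₁) * (midC c₀ c₁ r₀ r₁ * w).re = r₀ * (c₁ * w).re + r₁ * (c₀ * w).re := by
  rw [← re_ofReal_mul, midC, ← mul_assoc, mul_div_cancel₀ _ (ofReal_ne_zero.mpr hs)]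
  rw [show (c₁ * r₀ + c₀ * r₁) * w = (r₀ : ℂ) * (c₁ * w) + r₁ * (c₀ * w) by ring,
    add_re, re_ofReal_mul, re_ofReal_mul]

theorem add_mul_midR (c₀ c₁ : ℂ) {r₀ r₁ : ℝ} (h : 0 ≤ r₀ * r₁) (hs : r₀ + r₁ ≠ 0) :
    (r₀ + r₁) * midR c₀ c₁ r₀ r₁ = √(r₀ * r₁ * ((r₀ + r₁) ^ 2 - dist c₀ c₁ ^ 2)) := by
  rw [midR, mul_div_cancel₀ _ hs, Real.sqrt_mul h]

theorem le_re_mul_add_of_mem_closedBall_midC {c₀ c₁ u₀ u₁ z : ℂ} {r₀ r₁ ρ₀ ρ₁ : ℝ}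
    (h₀ : 0 < r₀) (h₁ : 0 < r₁) (hover : dist c₀ c₁ ≤ r₀ + r₁) (hu₀ : ‖u₀‖ = 1) (hu₁ : ‖u₁‖ = 1)
    (htan₀ : (c₀ * u₀).re = ρ₀ + r₀) (htan₁ : (c₁ * u₁).re = ρ₁ + r₁)
    (hz : z ∈ Metric.closedBall (midC c₀ c₁ r₀ r₁) (midR c₀ c₁ r₀ r₁)) :
    ρ₀ + ρ₁ ≤ (z * (u₀ + u₁)).re := by
  set s := r₀ + r₁
  set d := dist c₀ c₁
  set q := ‖(r₁ : ℂ) * u₁ - r₀ * u₀‖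
  have hs : 0 < s := by positivity
  have hq : q ^ 2 + r₀ * r₁ * ‖u₀ + u₁‖ ^ 2 = s ^ 2 := by
    rw [norm_ofReal_mul_sub_sq_add_mul_norm_add_sq, hu₀, hu₁]; ring
  have hqs : q ≤ s :=
    le_of_sq_le_sq (by rw [← hq]; exact le_add_of_nonneg_right (by positivity)) hs.le
  have hcenter : s * (midC c₀ c₁ r₀ r₁ * (u₀ + u₁)).re =
      s * (ρ₀ + ρ₁) + s ^ 2 + ((c₀ - c₁) * ((r₁ : ℂ) * u₁ - r₀ * u₀)).re := by
    rw [add_mul_re_midC_mul _ _ _ hs.ne']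
    simp only [mul_add, mul_sub, sub_mul, add_re, sub_re, mul_left_comm _ (r₀ : ℂ),
      mul_left_comm _ (r₁ : ℂ), re_ofReal_mul]
    linear_combination s * htan₀ + s * htan₁
  have hcross : -(d * q) ≤ ((c₀ - c₁) * ((r₁ : ℂ) * u₁ - r₀ * u₀)).re := by
    have := abs_re_le_norm ((c₀ - c₁) * ((r₁ : ℂ) * u₁ - r₀ * u₀))
    rw [norm_mul, ← dist_eq] at this
    exact (abs_le.mp this).1
  have hradius : s * (midR c₀ c₁ r₀ r₁ * ‖u₀ + u₁‖) ≤ s ^ 2 - d * q := by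
    rw [← mul_assoc, add_mul_midR _ _ (by positivity) hs.ne']
    have hdq : d * q ≤ s ^ 2 := by
      rw [sq]; exact mul_le_mul hover hqs (norm_nonneg _) hs.le
    rw [← Real.sqrt_sq (norm_nonneg (u₀ + u₁)), ← Real.sqrt_mul' _ (sq_nonneg _),
      Real.sqrt_le_left (sub_nonneg.mpr hdq)]
    calc r₀ * r₁ * (s ^ 2 - d ^ 2) * ‖u₀ + u₁‖ ^ 2 = (s ^ 2 - q ^ 2) * (s ^ 2 - d ^ 2) := by
          rw [← hq]; ring
      _ ≤ (s ^ 2 - d * q) ^ 2 := by linear_combination sq_nonneg (s * (q - d))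
  have hball :=
    mul_le_mul_of_nonneg_left (re_mul_sub_mul_norm_le_of_mem_closedBall hz (u₀ + u₁)) hs.le
  rw [mul_sub] at hball
  exact le_of_mul_le_mul_left (by linarith) hs

/-- Proposition (venn): if each disk X_i of a properly overlapping pair lies in
a half-plane H_i = {z : Re(z·e^{-iθ_i}) ≥ ρ_i} with tangent boundary line, and
the representatives satisfy |θ₀ − θ₁| < π (admissibility), then the midpoint
disk X_{1/2} lies in the intermediate half-plane
((θ₀+θ₁)/2, (ρ₀+ρ₁)/(2cos((θ₀−θ₁)/2))). -/
theorem midpoint_disk_in_intermediate_halfplane (c₀ c₁ : ℂ) (r₀ r₁ : ℝ)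
    (θ₀ θ₁ ρ₀ ρ₁ : ℝ)
    (h₀ : 0 < r₀) (h₁ : 0 < r₁) (hover : dist c₀ c₁ < r₀ + r₁)
    (hadm : |θ₀ - θ₁| < Real.pi)
    (htan₀ : (c₀ * Complex.exp (-(θ₀ : ℂ) * Complex.I)).re = ρ₀ + r₀)
    (htan₁ : (c₁ * Complex.exp (-(θ₁ : ℂ) * Complex.I)).re = ρ₁ + r₁) :
    ∀ z ∈ Metric.closedBall (midC c₀ c₁ r₀ r₁) (midR c₀ c₁ r₀ r₁),
      (ρ₀ + ρ₁) / (2 * Real.cos ((θ₀ - θ₁) / 2)) ≤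
        (z * Complex.exp (-((((θ₀ + θ₁) / 2 : ℝ)) : ℂ) * Complex.I)).re := by
  intro z hz
  have hcos : 0 < Real.cos ((θ₀ - θ₁) / 2) := by
    obtain ⟨hlo, hhi⟩ := abs_lt.mp hadm
    exact Real.cos_pos_of_mem_Ioo ⟨by linarith, by linarith⟩
  have key := le_re_mul_add_of_mem_closedBall_midC h₀ h₁ hover.le
    (norm_exp_neg_ofReal_mul_I θ₀) (norm_exp_neg_ofReal_mul_I θ₁) htan₀ htan₁ hz
  rw [exp_neg_mul_I_add_exp_neg_mul_I, mul_left_comm, re_ofReal_mul] at key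
  rwa [div_le_iff₀' (by positivity)]
end

section
/- Let X₀, X₁ be properly overlapping disks and Y₀, Y₁ properly overlapping disks in ℂ, such that the (Euclidean) distance between X_i and Y_i is at least ε_i > 0 for i = 0,1. Then the distance between the midpoint disks X_{1/2} and Y_{1/2} is at least (ε₀ + ε₁)/2; in particular X_{1/2} and Y_{1/2} are disjoint. -/
open scoped RealInnerProductSpace

section InnerProductSpace

variable {E : Type*} [NormedAddCommGroup E] [InnerProductSpace ℝ E]

theorem exists_norm_le_one_inner_eq_norm (x : E) : ∃ u : E, ‖u‖ ≤ 1 ∧ ⟪u, x⟫ = ‖x‖ := by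
  refine ⟨‖x‖⁻¹ • x, ?_, ?_⟩
  · rw [norm_smul, norm_inv, norm_norm]
    exact inv_mul_le_one
  · rw [real_inner_smul_left, real_inner_self_eq_norm_sq]
    rcases eq_or_ne ‖x‖ 0 with hx | hx
    · simp [hx]
    · field_simp

theorem norm_smul_sub_smul_sq_add_mul_norm_add_sq (s₀ s₁ : ℝ) (u₀ u₁ : E) :
    ‖s₀ • u₀ - s₁ • u₁‖ ^ 2 + s₀ * s₁ * ‖u₀ + u₁‖ ^ 2 =
      (s₀ + s₁) * (s₀ * ‖u₀‖ ^ 2 + s₁ * ‖u₁‖ ^ 2) := by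
  rw [norm_sub_sq_real, norm_add_sq_real, norm_smul, norm_smul, real_inner_smul_left,
    real_inner_smul_right, Real.norm_eq_abs, Real.norm_eq_abs, mul_pow, mul_pow, sq_abs, sq_abs]
  ring

theorem norm_smul_sub_smul_sq_add_mul_norm_add_sq_le {s₀ s₁ : ℝ} {u₀ u₁ : E}
    (hs₀ : 0 ≤ s₀) (hs₁ : 0 ≤ s₁) (hu₀ : ‖u₀‖ ≤ 1) (hu₁ : ‖u₁‖ ≤ 1) :
    ‖s₀ • u₀ - s₁ • u₁‖ ^ 2 + s₀ * s₁ * ‖u₀ + u₁‖ ^ 2 ≤ (s₀ + s₁) ^ 2 := by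
  rw [norm_smul_sub_smul_sq_add_mul_norm_add_sq, sq (s₀ + s₁)]
  have h₀ : ‖u₀‖ ^ 2 ≤ 1 := pow_le_one₀ (norm_nonneg _) hu₀
  have h₁ : ‖u₁‖ ^ 2 ≤ 1 := pow_le_one₀ (norm_nonneg _) hu₁
  exact mul_le_mul_of_nonneg_left
    (add_le_add (mul_le_of_le_one_right hs₀ h₀) (mul_le_of_le_one_right hs₁ h₁))
    (add_nonneg hs₀ hs₁)

theorem inner_add_inner_sub_inner_smul_add_smul {s₀ s₁ : ℝ} (hS : s₀ + s₁ ≠ 0)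
    (u₀ u₁ a₀ a₁ : E) :
    ⟪u₀, a₀⟫ + ⟪u₁, a₁⟫ - ⟪u₀ + u₁, (s₀ + s₁)⁻¹ • (s₁ • a₀ + s₀ • a₁)⟫ =
      (s₀ + s₁)⁻¹ * ⟪s₀ • u₀ - s₁ • u₁, a₀ - a₁⟫ := by
  simp only [inner_add_left, inner_add_right, inner_sub_left, inner_sub_right,
    real_inner_smul_left, real_inner_smul_right]
  field_simp
  ring

end InnerProductSpace

theorem midC_eq_smul (c₀ c₁ : ℂ) (r₀ r₁ : ℝ) :
    midC c₀ c₁ r₀ r₁ = (r₀ + r₁)⁻¹ • (r₁ • c₀ + r₀ • c₁) := by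
  simp only [midC, Complex.real_smul]
  push_cast
  ring

theorem inner_add_inner_sub_le_inner_midC_sub {a₀ a₁ : ℂ} {s₀ s₁ : ℝ} (u₀ u₁ : ℂ)
    (hs₀ : 0 ≤ s₀) (hs₁ : 0 ≤ s₁) (hS : 0 < s₀ + s₁) (hover : dist a₀ a₁ ≤ s₀ + s₁)
    (hu₀ : ‖u₀‖ ≤ 1) (hu₁ : ‖u₁‖ ≤ 1) :
    ⟪u₀, a₀⟫ + ⟪u₁, a₁⟫ - (s₀ + s₁) ≤
      ⟪u₀ + u₁, midC a₀ a₁ s₀ s₁⟫ - ‖u₀ + u₁‖ * midR a₀ a₁ s₀ s₁ := by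
  set S := s₀ + s₁
  set d := dist a₀ a₁
  set e := √(S ^ 2 - d ^ 2)
  set M := √(s₀ * s₁) * ‖u₀ + u₁‖
  set N := ‖s₀ • u₀ - s₁ • u₁‖
  have hNM : N ^ 2 + M ^ 2 ≤ S ^ 2 := by
    rw [mul_pow, Real.sq_sqrt (mul_nonneg hs₀ hs₁)]
    exact norm_smul_sub_smul_sq_add_mul_norm_add_sq_le hs₀ hs₁ hu₀ hu₁
  have hde : d ^ 2 + e ^ 2 = S ^ 2 := by
    rw [Real.sq_sqrt (by nlinarith [dist_nonneg (x := a₀) (y := a₁)])]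
    ring
  have hinner : ⟪s₀ • u₀ - s₁ • u₁, a₀ - a₁⟫ ≤ N * d :=
    (real_inner_le_norm _ _).trans_eq (by rw [← dist_eq_norm a₀ a₁])
  -- AM-GM: `2 (N d + M e) ≤ (N² + M²) + (d² + e²) ≤ 2 S²`
  have hcore : ⟪s₀ • u₀ - s₁ • u₁, a₀ - a₁⟫ + M * e ≤ S * S := by
    nlinarith [sq_nonneg (N - d), sq_nonneg (M - e)]
  have hoffset := inner_add_inner_sub_inner_smul_add_smul hS.ne' u₀ u₁ a₀ a₁
  rw [midC_eq_smul]
  have hR : ‖u₀ + u₁‖ * midR a₀ a₁ s₀ s₁ = S⁻¹ * (M * e) := by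
    simp only [midR, M, e, S, d]
    field_simp
  have hbound : S⁻¹ * (⟪s₀ • u₀ - s₁ • u₁, a₀ - a₁⟫ + M * e) ≤ S := by
    rw [inv_mul_le_iff₀ hS]
    exact hcore
  linarith

theorem inner_midC_add_le_inner_add_inner {b₀ b₁ : ℂ} {t₀ t₁ : ℝ} (u₀ u₁ : ℂ)
    (ht₀ : 0 ≤ t₀) (ht₁ : 0 ≤ t₁) (hT : 0 < t₀ + t₁) (hover : dist b₀ b₁ ≤ t₀ + t₁)
    (hu₀ : ‖u₀‖ ≤ 1) (hu₁ : ‖u₁‖ ≤ 1) :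
    ⟪u₀ + u₁, midC b₀ b₁ t₀ t₁⟫ + ‖u₀ + u₁‖ * midR b₀ b₁ t₀ t₁ ≤
      ⟪u₀, b₀⟫ + ⟪u₁, b₁⟫ + (t₀ + t₁) := by
  have h := inner_add_inner_sub_le_inner_midC_sub (-u₀) (-u₁) ht₀ ht₁ hT hover
    (by rwa [norm_neg]) (by rwa [norm_neg])
  rw [← neg_add, norm_neg] at h
  simp only [inner_neg_left] at h
  linarith

/-- Corollary (halfvenn): if X₀, X₁ properly overlap, Y₀, Y₁ properly overlap,
and the distance between X_i and Y_i is at least ε_i > 0 for i = 0,1, then the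
distance between the midpoint disks X_{1/2} and Y_{1/2} is at least
(ε₀+ε₁)/2; in particular they are disjoint. -/
theorem midpoint_disks_separated (a₀ a₁ b₀ b₁ : ℂ) (s₀ s₁ t₀ t₁ ε₀ ε₁ : ℝ)
    (hs₀ : 0 < s₀) (hs₁ : 0 < s₁) (ht₀ : 0 < t₀) (ht₁ : 0 < t₁)
    (hε₀ : 0 < ε₀) (hε₁ : 0 < ε₁)
    (hoverX : dist a₀ a₁ < s₀ + s₁) (hoverY : dist b₀ b₁ < t₀ + t₁)
    (hsep₀ : ε₀ ≤ dist a₀ b₀ - s₀ - t₀) (hsep₁ : ε₁ ≤ dist a₁ b₁ - s₁ - t₁) :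
    (ε₀ + ε₁) / 2 ≤
        dist (midC a₀ a₁ s₀ s₁) (midC b₀ b₁ t₀ t₁) -
          midR a₀ a₁ s₀ s₁ - midR b₀ b₁ t₀ t₁ ∧
      Disjoint (Metric.closedBall (midC a₀ a₁ s₀ s₁) (midR a₀ a₁ s₀ s₁))
        (Metric.closedBall (midC b₀ b₁ t₀ t₁) (midR b₀ b₁ t₀ t₁)) := by
  obtain ⟨u₀, hu₀, hD₀⟩ := exists_norm_le_one_inner_eq_norm (a₀ - b₀)
  obtain ⟨u₁, hu₁, hD₁⟩ := exists_norm_le_one_inner_eq_norm (a₁ - b₁)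
  rw [← dist_eq_norm, inner_sub_right] at hD₀ hD₁
  have hX := inner_add_inner_sub_le_inner_midC_sub u₀ u₁ hs₀.le hs₁.le (by positivity)
    hoverX.le hu₀ hu₁
  have hY := inner_midC_add_le_inner_add_inner u₀ u₁ ht₀.le ht₁.le (by positivity)
    hoverY.le hu₀ hu₁
  set u := u₀ + u₁
  set gap := dist (midC a₀ a₁ s₀ s₁) (midC b₀ b₁ t₀ t₁) - midR a₀ a₁ s₀ s₁ - midR b₀ b₁ t₀ t₁
  have hu : ‖u‖ ≤ 2 := (norm_add_le _ _).trans (by linarith)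
  have hcenters : ⟪u, midC a₀ a₁ s₀ s₁⟫ - ⟪u, midC b₀ b₁ t₀ t₁⟫ ≤
      ‖u‖ * dist (midC a₀ a₁ s₀ s₁) (midC b₀ b₁ t₀ t₁) := by
    rw [← inner_sub_right, dist_eq_norm]
    exact real_inner_le_norm _ _
  have hgap : ε₀ + ε₁ ≤ ‖u‖ * gap := by
    simp only [gap, mul_sub]
    linarith
  have hgap_pos : 0 < gap := pos_of_mul_pos_right (by linarith) (norm_nonneg u)
  have hhalf : ε₀ + ε₁ ≤ 2 * gap := hgap.trans (mul_le_mul_of_nonneg_right hu hgap_pos.le)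
  exact ⟨by linarith, Metric.closedBall_disjoint_closedBall (by linarith)⟩
end

section
/- The path of disks h_t satisfies the halving property: h(c₀,r₀,c_{1/2},r_{1/2}, 2t) = h(c₀,r₀,c₁,r₁, t) for t ∈ [0, 1/2], where (c_{1/2}, r_{1/2}) = h(c₀,r₀,c₁,r₁, 1/2) and the angle of the pair (c₀,r₀),(c_{1/2},r_{1/2}) equals θ/2. -/
/-!
At `t = 1/2` the two sines in the homotopy coincide, so `c_{1/2}` is the weighted mean
`(r₀ c₁ + r₁ c₀)/(r₀ + r₁)` and `r_{1/2} = 2 r₀ r₁ cos(θ/2)/(r₀ + r₁)`. Hence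
`|c₀ − c_{1/2}| = r₀ |c₀ − c₁|/(r₀ + r₁)`, and the law of cosines for the half pair reduces to
`cos θ = 2 cos²(θ/2) − 1`, giving the angle `θ/2`. For the halving identity, the sum-to-product
formula `sin((1−t)θ) − sin(tθ) = 2 cos(θ/2) sin(θ/2 − tθ)` shows that numerator and
denominator of the half homotopy at `2t` are those of the full homotopy at `t`, both multiplied
by `r₀/(r₀ + r₁)`.
-/

/-- The angle of a pair of properly overlapping disks:
θ = arccos((r₀² + r₁² − |c₀−c₁|²)/(2r₀r₁)). -/
noncomputable def diskAngle (c₀ c₁ : ℂ) (r₀ r₁ : ℝ) : ℝ :=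
  Real.arccos ((r₀ ^ 2 + r₁ ^ 2 - dist c₀ c₁ ^ 2) / (2 * r₀ * r₁))

/-- The center at time t of the disk homotopy h(c₀,r₀,c₁,r₁,t). -/
noncomputable def hC (c₀ c₁ : ℂ) (r₀ r₁ t : ℝ) : ℂ :=
  (c₁ * ((r₀ * Real.sin (t * diskAngle c₀ c₁ r₀ r₁) : ℝ) : ℂ) +
      c₀ * ((r₁ * Real.sin ((1 - t) * diskAngle c₀ c₁ r₀ r₁) : ℝ) : ℂ)) /
    (((r₀ * Real.sin (t * diskAngle c₀ c₁ r₀ r₁) +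
        r₁ * Real.sin ((1 - t) * diskAngle c₀ c₁ r₀ r₁) : ℝ)) : ℂ)

/-- The radius at time t of the disk homotopy h(c₀,r₀,c₁,r₁,t). -/
noncomputable def hR (c₀ c₁ : ℂ) (r₀ r₁ t : ℝ) : ℝ :=
  r₀ * r₁ * Real.sin (diskAngle c₀ c₁ r₀ r₁) /
    (r₀ * Real.sin (t * diskAngle c₀ c₁ r₀ r₁) +
      r₁ * Real.sin ((1 - t) * diskAngle c₀ c₁ r₀ r₁))

open Real

noncomputable section

def homotopyCenter (c₀ c₁ : ℂ) (r₀ r₁ θ t : ℝ) : ℂ :=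
  (c₁ * ((r₀ * sin (t * θ) : ℝ) : ℂ) + c₀ * ((r₁ * sin ((1 - t) * θ) : ℝ) : ℂ)) /
    (((r₀ * sin (t * θ) + r₁ * sin ((1 - t) * θ) : ℝ)) : ℂ)

def homotopyRadius (r₀ r₁ θ t : ℝ) : ℝ :=
  r₀ * r₁ * sin θ / (r₀ * sin (t * θ) + r₁ * sin ((1 - t) * θ))

end

theorem hC_eq_homotopyCenter (c₀ c₁ : ℂ) (r₀ r₁ t : ℝ) :
    hC c₀ c₁ r₀ r₁ t = homotopyCenter c₀ c₁ r₀ r₁ (diskAngle c₀ c₁ r₀ r₁) t := rfl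

theorem hR_eq_homotopyRadius (c₀ c₁ : ℂ) (r₀ r₁ t : ℝ) :
    hR c₀ c₁ r₀ r₁ t = homotopyRadius r₀ r₁ (diskAngle c₀ c₁ r₀ r₁) t := rfl

section Trigonometry

variable {θ : ℝ}

theorem homotopyCenter_half (c₀ c₁ : ℂ) (r₀ r₁ : ℝ) (hθ : sin (θ / 2) ≠ 0) :
    homotopyCenter c₀ c₁ r₀ r₁ θ (1 / 2) = (r₀ * c₁ + r₁ * c₀) / ((r₀ + r₁ : ℝ) : ℂ) := by
  have hθc : ((sin (θ / 2) : ℝ) : ℂ) ≠ 0 := by exact_mod_cast hθ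
  rw [homotopyCenter, show (1 - 1 / 2 : ℝ) * θ = θ / 2 by ring,
    show (1 / 2 : ℝ) * θ = θ / 2 by ring, ← mul_div_mul_left _ ((r₀ + r₁ : ℝ) : ℂ) hθc]
  congr 1 <;> push_cast <;> ring

theorem sin_eq_two_mul_sin_half_mul_cos_half (θ : ℝ) : sin θ = 2 * sin (θ / 2) * cos (θ / 2) := by
  rw [← sin_two_mul]
  ring_nf

theorem homotopyRadius_half (r₀ r₁ : ℝ) (hθ : sin (θ / 2) ≠ 0) :
    homotopyRadius r₀ r₁ θ (1 / 2) = 2 * r₀ * r₁ * cos (θ / 2) / (r₀ + r₁) := by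
  rw [homotopyRadius, show (1 - 1 / 2 : ℝ) * θ = θ / 2 by ring,
    show (1 / 2 : ℝ) * θ = θ / 2 by ring, ← mul_div_mul_left _ (r₀ + r₁) hθ,
    sin_eq_two_mul_sin_half_mul_cos_half θ]
  ring_nf

theorem sin_add_two_mul_cos_half_mul_sin (t : ℝ) :
    sin (t * θ) + 2 * cos (θ / 2) * sin (θ / 2 - t * θ) = sin ((1 - t) * θ) := by
  have h := sin_sub_sin ((1 - t) * θ) (t * θ)
  rw [show ((1 - t) * θ - t * θ) / 2 = θ / 2 - t * θ by ring,
    show ((1 - t) * θ + t * θ) / 2 = θ / 2 by ring] at h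
  linarith

variable {r₀ r₁ : ℝ}

theorem homotopy_denominator_halving (t : ℝ) (hr : r₀ + r₁ ≠ 0) :
    r₀ * sin (2 * t * (θ / 2)) +
        2 * r₀ * r₁ * cos (θ / 2) / (r₀ + r₁) * sin ((1 - 2 * t) * (θ / 2)) =
      r₀ / (r₀ + r₁) * (r₀ * sin (t * θ) + r₁ * sin ((1 - t) * θ)) := by
  rw [← sin_add_two_mul_cos_half_mul_sin t, show 2 * t * (θ / 2) = t * θ by ring,
    show (1 - 2 * t) * (θ / 2) = θ / 2 - t * θ by ring]
  field_simp
  ring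

theorem homotopyCenter_halving (c₀ c₁ : ℂ) (t : ℝ) (h₀ : r₀ ≠ 0) (hr : r₀ + r₁ ≠ 0) :
    homotopyCenter c₀ ((r₀ * c₁ + r₁ * c₀) / ((r₀ + r₁ : ℝ) : ℂ)) r₀
        (2 * r₀ * r₁ * cos (θ / 2) / (r₀ + r₁)) (θ / 2) (2 * t) =
      homotopyCenter c₀ c₁ r₀ r₁ θ t := by
  have hk : ((r₀ / (r₀ + r₁) : ℝ) : ℂ) ≠ 0 := by exact_mod_cast div_ne_zero h₀ hr
  have hrc : (r₀ : ℂ) + r₁ ≠ 0 := by exact_mod_cast hr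
  have hnum : (r₀ * c₁ + r₁ * c₀) / ((r₀ + r₁ : ℝ) : ℂ) * ((r₀ * sin (2 * t * (θ / 2)) : ℝ) : ℂ) +
        c₀ * ((2 * r₀ * r₁ * cos (θ / 2) / (r₀ + r₁) * sin ((1 - 2 * t) * (θ / 2)) : ℝ) : ℂ) =
      ((r₀ / (r₀ + r₁) : ℝ) : ℂ) *
        (c₁ * ((r₀ * sin (t * θ) : ℝ) : ℂ) + c₀ * ((r₁ * sin ((1 - t) * θ) : ℝ) : ℂ)) := by
    rw [← sin_add_two_mul_cos_half_mul_sin t, show 2 * t * (θ / 2) = t * θ by ring,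
      show (1 - 2 * t) * (θ / 2) = θ / 2 - t * θ by ring]
    push_cast
    field_simp
    ring
  rw [homotopyCenter, homotopyCenter, hnum, homotopy_denominator_halving t hr,
    Complex.ofReal_mul (r₀ / (r₀ + r₁)), mul_div_mul_left _ _ hk]

theorem homotopyRadius_halving (t : ℝ) (h₀ : r₀ ≠ 0) (hr : r₀ + r₁ ≠ 0) :
    homotopyRadius r₀ (2 * r₀ * r₁ * cos (θ / 2) / (r₀ + r₁)) (θ / 2) (2 * t) =
      homotopyRadius r₀ r₁ θ t := by
  rw [homotopyRadius, homotopyRadius, homotopy_denominator_halving t hr,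
    ← mul_div_mul_left _ _ (div_ne_zero h₀ hr), sin_eq_two_mul_sin_half_mul_cos_half θ]
  field_simp

end Trigonometry

section DiskAngle

variable {c₀ c₁ : ℂ} {r₀ r₁ : ℝ}

theorem dist_sq_eq_of_diskAngle (h₀ : r₀ ≠ 0) (h₁ : r₁ ≠ 0)
    (hθpos : 0 < diskAngle c₀ c₁ r₀ r₁) (hθlt : diskAngle c₀ c₁ r₀ r₁ < π) :
    dist c₀ c₁ ^ 2 = r₀ ^ 2 + r₁ ^ 2 - 2 * r₀ * r₁ * cos (diskAngle c₀ c₁ r₀ r₁) := by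
  rw [diskAngle] at *
  rw [cos_arccos (arccos_lt_pi.mp hθlt).le (arccos_pos.mp hθpos).le]
  field_simp
  ring

theorem diskAngle_eq_of_dist_sq {φ : ℝ} (h₀ : r₀ ≠ 0) (h₁ : r₁ ≠ 0) (hφ₀ : 0 ≤ φ) (hφπ : φ ≤ π)
    (h : dist c₀ c₁ ^ 2 = r₀ ^ 2 + r₁ ^ 2 - 2 * r₀ * r₁ * cos φ) :
    diskAngle c₀ c₁ r₀ r₁ = φ := by
  rw [diskAngle, h]
  conv_rhs => rw [← arccos_cos hφ₀ hφπ]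
  congr 1
  field_simp
  ring

theorem dist_weightedMean (c₀ c₁ : ℂ) (h₀ : 0 ≤ r₀) (hr : 0 < r₀ + r₁) :
    dist c₀ ((r₀ * c₁ + r₁ * c₀) / ((r₀ + r₁ : ℝ) : ℂ)) = r₀ / (r₀ + r₁) * dist c₀ c₁ := by
  have hrc : (r₀ : ℂ) + r₁ ≠ 0 := by exact_mod_cast hr.ne'
  have hdiff : c₀ - (r₀ * c₁ + r₁ * c₀) / ((r₀ + r₁ : ℝ) : ℂ) =
      ((r₀ / (r₀ + r₁) : ℝ) : ℂ) * (c₀ - c₁) := by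
    push_cast
    field_simp
    ring
  rw [Complex.dist_eq, Complex.dist_eq, hdiff, norm_mul, Complex.norm_real, Real.norm_eq_abs,
    abs_of_nonneg (by positivity)]

theorem diskAngle_weightedMean (h₀ : 0 < r₀) (h₁ : 0 < r₁)
    (hθpos : 0 < diskAngle c₀ c₁ r₀ r₁) (hθlt : diskAngle c₀ c₁ r₀ r₁ < π) :
    diskAngle c₀ ((r₀ * c₁ + r₁ * c₀) / ((r₀ + r₁ : ℝ) : ℂ)) r₀
        (2 * r₀ * r₁ * cos (diskAngle c₀ c₁ r₀ r₁ / 2) / (r₀ + r₁)) =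
      diskAngle c₀ c₁ r₀ r₁ / 2 := by
  set θ := diskAngle c₀ c₁ r₀ r₁
  have hcos : 0 < cos (θ / 2) := cos_pos_of_mem_Ioo ⟨by linarith, by linarith⟩
  have hd := dist_sq_eq_of_diskAngle h₀.ne' h₁.ne' hθpos hθlt
  apply diskAngle_eq_of_dist_sq h₀.ne' (by positivity) (by linarith) (by linarith)
  have hcos2 : cos θ = 2 * cos (θ / 2) ^ 2 - 1 := by
    rw [← cos_two_mul]
    ring_nf
  rw [dist_weightedMean c₀ c₁ h₀.le (by linarith), mul_pow, hd, hcos2]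
  field_simp
  ring

end DiskAngle

theorem disk_homotopy_halving_general (c₀ c₁ : ℂ) (r₀ r₁ : ℝ)
    (h₀ : 0 < r₀) (h₁ : 0 < r₁)
    (hθpos : 0 < diskAngle c₀ c₁ r₀ r₁) (hθlt : diskAngle c₀ c₁ r₀ r₁ < Real.pi) :
    diskAngle c₀ (hC c₀ c₁ r₀ r₁ (1 / 2)) r₀ (hR c₀ c₁ r₀ r₁ (1 / 2)) =
        diskAngle c₀ c₁ r₀ r₁ / 2 ∧
      ∀ t ∈ Set.Icc (0 : ℝ) (1 / 2),
        hC c₀ (hC c₀ c₁ r₀ r₁ (1 / 2)) r₀ (hR c₀ c₁ r₀ r₁ (1 / 2)) (2 * t) =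
            hC c₀ c₁ r₀ r₁ t ∧
          hR c₀ (hC c₀ c₁ r₀ r₁ (1 / 2)) r₀ (hR c₀ c₁ r₀ r₁ (1 / 2)) (2 * t) =
            hR c₀ c₁ r₀ r₁ t := by
  have hsin : sin (diskAngle c₀ c₁ r₀ r₁ / 2) ≠ 0 :=
    (sin_pos_of_pos_of_lt_pi (by linarith) (by linarith)).ne'
  have hc : hC c₀ c₁ r₀ r₁ (1 / 2) = _ := homotopyCenter_half c₀ c₁ r₀ r₁ hsin
  have hr : hR c₀ c₁ r₀ r₁ (1 / 2) = _ := homotopyRadius_half r₀ r₁ hsin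
  have hangle := diskAngle_weightedMean h₀ h₁ hθpos hθlt
  rw [← hc, ← hr] at hangle
  refine ⟨hangle, fun t _ => ⟨?_, ?_⟩⟩
  · rw [hC_eq_homotopyCenter, hangle, hc, hr, hC_eq_homotopyCenter]
    exact homotopyCenter_halving c₀ c₁ t h₀.ne' (by linarith)
  · rw [hR_eq_homotopyRadius, hangle, hr, hR_eq_homotopyRadius]
    exact homotopyRadius_halving t h₀.ne' (by linarith)

/-- Halving property of the disk homotopy: with (c_{1/2}, r_{1/2}) =
h(c₀,r₀,c₁,r₁,1/2), the angle of the pair (c₀,r₀),(c_{1/2},r_{1/2}) is θ/2 and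
h(c₀,r₀,c_{1/2},r_{1/2},2t) = h(c₀,r₀,c₁,r₁,t) for t ∈ [0,1/2]. -/
theorem disk_homotopy_halving (c₀ c₁ : ℂ) (r₀ r₁ : ℝ)
    (h₀ : 0 < r₀) (h₁ : 0 < r₁) (hover : dist c₀ c₁ < r₀ + r₁)
    (hθpos : 0 < diskAngle c₀ c₁ r₀ r₁) (hθlt : diskAngle c₀ c₁ r₀ r₁ < Real.pi) :
    diskAngle c₀ (hC c₀ c₁ r₀ r₁ (1 / 2)) r₀ (hR c₀ c₁ r₀ r₁ (1 / 2)) =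
        diskAngle c₀ c₁ r₀ r₁ / 2 ∧
      ∀ t ∈ Set.Icc (0 : ℝ) (1 / 2),
        hC c₀ (hC c₀ c₁ r₀ r₁ (1 / 2)) r₀ (hR c₀ c₁ r₀ r₁ (1 / 2)) (2 * t) =
            hC c₀ c₁ r₀ r₁ t ∧
          hR c₀ (hC c₀ c₁ r₀ r₁ (1 / 2)) r₀ (hR c₀ c₁ r₀ r₁ (1 / 2)) (2 * t) =
            hR c₀ c₁ r₀ r₁ t :=
  disk_homotopy_halving_general c₀ c₁ r₀ r₁ h₀ h₁ hθpos hθlt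
end

section
/- Let X₀ ⊆ Y₀ and X₁ ⊆ Y₁ be disks with X₀,X₁ properly overlapping, Y₀,Y₁ properly overlapping, X₀ and Y₀ internally tangent (n(X₀,Y₀) = 0) and X₁ = Y₁. Then the midpoint disks satisfy X_{1/2} ⊆ Y_{1/2}. -/
theorem Real.sqrt_add_sqrt_le_sqrt_of_mul_eq {p q x y : ℝ} (hp : 0 ≤ p) (hq : 0 ≤ q)
    (hx : 0 ≤ x) (hy : 0 ≤ y) (hpq : p * q = x * y) :
    √p + √q ≤ √(p + q + x + y) := by
  have hamgm : 2 * (√x * √y) ≤ x + y := by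
    nlinarith [sq_nonneg (√x - √y), Real.sq_sqrt hx, Real.sq_sqrt hy]
  have hpq' : √p * √q = √x * √y := by
    rw [← Real.sqrt_mul hp, ← Real.sqrt_mul hx, hpq]
  apply Real.le_sqrt_of_sq_le
  nlinarith [Real.sq_sqrt hp, Real.sq_sqrt hq]

theorem norm_smul_sub_smul_sq {E : Type*} [NormedAddCommGroup E] [InnerProductSpace ℝ E]
    (α β : ℝ) (u v : E) :
    ‖α • u - β • v‖ ^ 2
      = (α - β) * (α * ‖u‖ ^ 2 - β * ‖v‖ ^ 2) + α * β * ‖u - v‖ ^ 2 := by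
  rw [norm_sub_sq_real, norm_sub_sq_real, norm_smul, norm_smul, real_inner_smul_left,
    real_inner_smul_right, Real.norm_eq_abs, Real.norm_eq_abs, mul_pow, mul_pow, sq_abs,
    sq_abs]
  ring

theorem midC_eq_add_smul (c₀ c₁ : ℂ) {r₀ r₁ : ℝ} (h : r₀ + r₁ ≠ 0) :
    midC c₀ c₁ r₀ r₁ = c₁ + (r₁ / (r₀ + r₁)) • (c₀ - c₁) := by
  have h' : (r₀ : ℂ) + r₁ ≠ 0 := mod_cast h
  rw [midC, Complex.real_smul]
  push_cast
  field_simp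
  ring

theorem midR_eq_sqrt_div {c₀ c₁ : ℂ} {r₀ r₁ : ℝ} (h₀ : 0 ≤ r₀) (h₁ : 0 ≤ r₁) :
    midR c₀ c₁ r₀ r₁ = √(r₀ * r₁ * ((r₀ + r₁) ^ 2 - dist c₀ c₁ ^ 2)) / (r₀ + r₁) := by
  rw [midR, ← Real.sqrt_mul (mul_nonneg h₀ h₁)]

theorem dist_midC_midC_s16 {a b c : ℂ} {s t r : ℝ} (hr : 0 ≤ r) (hs : 0 < s + r) (ht : 0 < t + r) :
    dist (midC a c s r) (midC b c t r)
      = r * ‖(t + r) • (a - c) - (s + r) • (b - c)‖ / ((s + r) * (t + r)) := by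
  have hsmul : midC a c s r - midC b c t r
      = (r / ((s + r) * (t + r))) • ((t + r) • (a - c) - (s + r) • (b - c)) := by
    rw [midC_eq_add_smul a c hs.ne', midC_eq_add_smul b c ht.ne', add_sub_add_left_eq_sub]
    match_scalars <;> field_simp
  rw [dist_eq_norm, hsmul, norm_smul, Real.norm_of_nonneg (by positivity)]
  ring

theorem midpoint_nesting_ineq_of_tangent {s t r d e N : ℝ} (hs : 0 ≤ s) (hr : 0 ≤ r)
    (hst : s ≤ t) (hd : 0 ≤ d) (hdA : d ≤ s + r) (he : 0 ≤ e) (hed : e ≤ d + (t - s)) (hN : 0 ≤ N)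
    (hN2 : N ^ 2 = (t - s) * ((t + r) * d ^ 2 - (s + r) * e ^ 2 + (s + r) * (t + r) * (t - s))) :
    (t + r) * √(s * r * ((s + r) ^ 2 - d ^ 2)) + r * N
      ≤ (s + r) * √(t * r * ((t + r) ^ 2 - e ^ 2)) := by
  set K := (t + r) * d ^ 2 - (s + r) * e ^ 2 + (s + r) * (t + r) * (t - s) with hK_def
  have hδ : 0 ≤ t - s := sub_nonneg.mpr hst
  have hA : 0 ≤ s + r := add_nonneg hs hr
  have hB : 0 ≤ t + r := by linarith
  have hdA2 : 0 ≤ (s + r) ^ 2 - d ^ 2 := sub_nonneg.mpr (pow_le_pow_left₀ hd hdA 2)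
  have hK : 0 ≤ K := by
    -- K - (t - s) * (s + r - d) ^ 2 = (s + r) * ((d + (t - s)) ^ 2 - e ^ 2)
    have he2 : e ^ 2 ≤ (d + (t - s)) ^ 2 := pow_le_pow_left₀ he hed 2
    nlinarith [mul_le_mul_of_nonneg_left he2 hA, mul_nonneg hδ (sq_nonneg (s + r - d))]
  have hS : 0 ≤ s * r * ((s + r) ^ 2 - d ^ 2) := by positivity
  calc (t + r) * √(s * r * ((s + r) ^ 2 - d ^ 2)) + r * N
      = √((t + r) ^ 2 * (s * r * ((s + r) ^ 2 - d ^ 2))) + √((r * N) ^ 2) := by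
        rw [Real.sqrt_sq (by positivity), Real.sqrt_mul' _ hS, Real.sqrt_sq hB]
    _ ≤ √((t + r) ^ 2 * (s * r * ((s + r) ^ 2 - d ^ 2)) + (r * N) ^ 2
          + r ^ 2 * (t + r) * (t - s) * ((s + r) ^ 2 - d ^ 2) + r * (t + r) * s * K) :=
        Real.sqrt_add_sqrt_le_sqrt_of_mul_eq (by positivity) (by positivity) (by positivity)
          (by positivity) (by rw [mul_pow, hN2]; ring)
    _ = √((s + r) ^ 2 * (t * r * ((t + r) ^ 2 - e ^ 2))) := by
        rw [mul_pow, hN2, hK_def]; ring_nf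
    _ = (s + r) * √(t * r * ((t + r) ^ 2 - e ^ 2)) := by
        rw [Real.sqrt_mul (sq_nonneg _), Real.sqrt_sq hA]

theorem midpoint_nesting_tangent_general (a₀ b₀ c₁ : ℂ) (s₀ t₀ r₁ : ℝ)
    (hs₀ : 0 < s₀) (hr₁ : 0 < r₁)
    (htang : t₀ - s₀ = dist a₀ b₀)
    (hoverX : dist a₀ c₁ < s₀ + r₁) :
    Metric.closedBall (midC a₀ c₁ s₀ r₁) (midR a₀ c₁ s₀ r₁) ⊆
      Metric.closedBall (midC b₀ c₁ t₀ r₁) (midR b₀ c₁ t₀ r₁) := by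
  have hst : s₀ ≤ t₀ := by linarith [dist_nonneg (x := a₀) (y := b₀)]
  have hA : 0 < s₀ + r₁ := by linarith
  have hB : 0 < t₀ + r₁ := by linarith
  set N := ‖(t₀ + r₁) • (a₀ - c₁) - (s₀ + r₁) • (b₀ - c₁)‖ with hN
  have hN2 : N ^ 2 = (t₀ - s₀) * ((t₀ + r₁) * dist a₀ c₁ ^ 2 - (s₀ + r₁) * dist b₀ c₁ ^ 2
      + (s₀ + r₁) * (t₀ + r₁) * (t₀ - s₀)) := by
    rw [norm_smul_sub_smul_sq, sub_sub_sub_cancel_right, ← dist_eq_norm, ← dist_eq_norm,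
      ← dist_eq_norm, ← htang]
    ring
  have hed : dist b₀ c₁ ≤ dist a₀ c₁ + (t₀ - s₀) := by
    rw [htang, add_comm]; exact dist_triangle_left _ _ _
  apply Metric.closedBall_subset_closedBall'
  calc midR a₀ c₁ s₀ r₁ + dist (midC a₀ c₁ s₀ r₁) (midC b₀ c₁ t₀ r₁)
      = ((t₀ + r₁) * √(s₀ * r₁ * ((s₀ + r₁) ^ 2 - dist a₀ c₁ ^ 2)) + r₁ * N)
          / ((s₀ + r₁) * (t₀ + r₁)) := by
        rw [dist_midC_midC_s16 hr₁.le hA hB, ← hN, midR_eq_sqrt_div hs₀.le hr₁.le]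
        field_simp
    _ ≤ (s₀ + r₁) * √(t₀ * r₁ * ((t₀ + r₁) ^ 2 - dist b₀ c₁ ^ 2))
          / ((s₀ + r₁) * (t₀ + r₁)) := by
        gcongr
        exact midpoint_nesting_ineq_of_tangent hs₀.le hr₁.le hst dist_nonneg hoverX.le
          dist_nonneg hed (norm_nonneg _) hN2
    _ = midR b₀ c₁ t₀ r₁ := by
        rw [midR_eq_sqrt_div (hs₀.le.trans hst) hr₁.le]
        field_simp

/-- Lemma (spacingtang): if X₀ ⊆ Y₀ are internally tangent (n(X₀,Y₀) = 0),
X₁ = Y₁, and the pairs X₀,X₁ and Y₀,Y₁ each properly overlap, then the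
midpoint disk X_{1/2} is contained in the midpoint disk Y_{1/2}. -/
theorem midpoint_nesting_tangent (a₀ b₀ c₁ : ℂ) (s₀ t₀ r₁ : ℝ)
    (hs₀ : 0 < s₀) (ht₀ : 0 < t₀) (hr₁ : 0 < r₁)
    (htang : t₀ - s₀ = dist a₀ b₀)
    (hoverX : dist a₀ c₁ < s₀ + r₁) (hoverY : dist b₀ c₁ < t₀ + r₁) :
    Metric.closedBall (midC a₀ c₁ s₀ r₁) (midR a₀ c₁ s₀ r₁) ⊆
      Metric.closedBall (midC b₀ c₁ t₀ r₁) (midR b₀ c₁ t₀ r₁) :=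
  midpoint_nesting_tangent_general a₀ b₀ c₁ s₀ t₀ r₁ hs₀ hr₁ htang hoverX
end
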